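/- arXiv:1611.01883 — 5 statements merged into one kernel-verified Lean document; each statement's English description precedes it below -/
import Mathlib

section
/- Let A be an n×n integer matrix, let l ≥ 1, and suppose the matrix C := ∑_{i=0}^{m-1} A^{il} has nonzero determinant, where N = lm. Define T_N := {x ∈ ℤⁿ : kx ∈ im(1 - A^N) for some positive integer k} and T_l similarly with A^l. Then T_N = T_l. -/
/-!
The geometric sum `C = ∑_{i<m} (A^l)^i` factors `1 - A^(lm) = (1 - A^l) C`, so
`im(1 - A^(lm)) ⊆ im(1 - A^l)`. Conversely `C · adj C = det C`, so `det C` times any element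
of `im(1 - A^l)` lies in `im(1 - A^(lm))`. As `det C ≠ 0`, the two images are commensurable,
and hence have the same preimage of the torsion of the cokernel.
-/

namespace Submodule

variable {M : Type*} [AddCommGroup M]

/-- The preimage of the torsion of `M ⧸ p`; the paper's `T_N` is `saturation (im (1 - A^N))`. -/
def saturation (p : Submodule ℤ M) : Set M :=
  {x | ∃ k : ℕ, 0 < k ∧ (k : ℤ) • x ∈ p}

theorem saturation_mono {p q : Submodule ℤ M} (h : p ≤ q) : p.saturation ⊆ q.saturation :=
  fun _ ⟨k, hk, hx⟩ => ⟨k, hk, h hx⟩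

theorem saturation_subset_of_smul_mem {p q : Submodule ℤ M} {d : ℤ} (hd : d ≠ 0)
    (h : ∀ x ∈ q, d • x ∈ p) : q.saturation ⊆ p.saturation := by
  rintro x ⟨k, hk, hx⟩
  refine ⟨k * d.natAbs, Nat.mul_pos hk (Int.natAbs_pos.mpr hd), ?_⟩
  have hdx : (d.natAbs : ℤ) • (k : ℤ) • x ∈ p := by
    rcases Int.natAbs_eq d with hd' | hd'
    · rw [← hd']
      exact h _ hx
    · rw [← neg_mem_iff, ← neg_smul, ← hd']
      exact h _ hx
  rwa [smul_smul, mul_comm, ← Nat.cast_mul] at hdx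

end Submodule

namespace Matrix

variable {ι κ ν R : Type*} [Fintype κ] [Fintype ν] [CommRing R]

theorem range_mulVecLin_mul_le (B : Matrix ι κ R) (C : Matrix κ ν R) :
    LinearMap.range (B * C).mulVecLin ≤ LinearMap.range B.mulVecLin := by
  rw [mulVecLin_mul]
  exact LinearMap.range_comp_le_range _ _

theorem det_smul_mem_range_mulVecLin_mul [DecidableEq ν] (B : Matrix ι ν R) (C : Matrix ν ν R)
    {x : ι → R} (hx : x ∈ LinearMap.range B.mulVecLin) :
    C.det • x ∈ LinearMap.range (B * C).mulVecLin := by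
  obtain ⟨v, rfl⟩ := hx
  refine ⟨C.adjugate *ᵥ v, ?_⟩
  rw [mulVecLin_apply, mulVecLin_apply, mulVec_mulVec, Matrix.mul_assoc, mul_adjugate,
    Matrix.mul_smul, Matrix.mul_one, smul_mulVec]

end Matrix

theorem stmt12_general (n l m : ℕ) (A : Matrix (Fin n) (Fin n) ℤ)
    (hdet : (∑ i ∈ Finset.range m, (A ^ l) ^ i).det ≠ 0) :
    {x : Fin n → ℤ | ∃ k : ℕ, 0 < k ∧
        (k : ℤ) • x ∈ LinearMap.range (Matrix.mulVecLin (1 - A ^ (l * m)))} =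
    {x : Fin n → ℤ | ∃ k : ℕ, 0 < k ∧
        (k : ℤ) • x ∈ LinearMap.range (Matrix.mulVecLin (1 - A ^ l))} := by
  set C := ∑ i ∈ Finset.range m, (A ^ l) ^ i
  have hfactor : 1 - A ^ (l * m) = (1 - A ^ l) * C := by
    rw [pow_mul, mul_neg_geom_sum]
  change Submodule.saturation _ = Submodule.saturation _
  rw [hfactor]
  exact (Submodule.saturation_mono (Matrix.range_mulVecLin_mul_le _ _)).antisymm
    (Submodule.saturation_subset_of_smul_mem hdet fun _ hx =>
      Matrix.det_smul_mem_range_mulVecLin_mul _ _ hx)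

/-- If `C = ∑_{i<m} (A^l)^i` has nonzero determinant, then `T_{lm} = T_l`, where
`T_j = {x : kx ∈ im(1 - A^j) for some k ≥ 1}`. -/
theorem stmt12 (n l m : ℕ) (hl : 1 ≤ l) (hm : 1 ≤ m) (A : Matrix (Fin n) (Fin n) ℤ)
    (hdet : (∑ i ∈ Finset.range m, (A ^ l) ^ i).det ≠ 0) :
    {x : Fin n → ℤ | ∃ k : ℕ, 0 < k ∧
        (k : ℤ) • x ∈ LinearMap.range (Matrix.mulVecLin (1 - A ^ (l * m)))} =
    {x : Fin n → ℤ | ∃ k : ℕ, 0 < k ∧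
        (k : ℤ) • x ∈ LinearMap.range (Matrix.mulVecLin (1 - A ^ l))} :=
  stmt12_general n l m A hdet
end

section
/- Let A be an n×n integer matrix, l, m ≥ 1, N = lm, and suppose T_N = T_l, where T_j := {x ∈ ℤⁿ : kx ∈ im(1 - A^j) for some k ≥ 1}. Then the map a + im(1 - A^N) + tor ↦ a + im(1 - A^l) + tor is a well-defined group isomorphism from coker(1 - A^N)/tor(coker(1 - A^N)) onto coker(1 - A^l)/tor(coker(1 - A^l)). -/
/-!
Write `T_j` for the preimage of the torsion of `coker(1 - A^j)` in `ℤⁿ`. By the third isomorphism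
theorem, `coker(1 - A^j)/tor ≅ ℤⁿ/T_j` via `a ↦ a`, so the hypothesis `T_{lm} = T_l` identifies
both sides with the same quotient `ℤⁿ/T_l`.
-/

namespace Submodule

section CommRing

variable {R M : Type*} [CommRing R] [AddCommGroup M] [Module R M]

def quotientQuotientEquivQuotientComapMkQ (N : Submodule R M) (P : Submodule R (M ⧸ N)) :
    ((M ⧸ N) ⧸ P) ≃ₗ[R] M ⧸ P.comap N.mkQ :=
  quotEquivOfEq _ _ (map_comap_eq_self (by simp)).symm ≪≫ₗ
    quotientQuotientEquivQuotient N _ (le_comap_mkQ N P)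

@[simp]
theorem quotientQuotientEquivQuotientComapMkQ_mk_mk (N : Submodule R M)
    (P : Submodule R (M ⧸ N)) (x : M) :
    quotientQuotientEquivQuotientComapMkQ N P (Quotient.mk (Quotient.mk x)) = Quotient.mk x :=
  rfl

theorem mem_comap_mkQ_torsion_iff (N : Submodule R M) (x : M) :
    x ∈ (torsion R (M ⧸ N)).comap N.mkQ ↔ ∃ a : nonZeroDivisors R, a • x ∈ N := by
  simp only [mem_comap, mem_torsion_iff, mkQ_apply, ← Quotient.mk_smul, Quotient.mk_eq_zero]

end CommRing

theorem mem_comap_mkQ_torsion_iff_int {M : Type*} [AddCommGroup M] (N : Submodule ℤ M) (x : M) :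
    x ∈ (torsion ℤ (M ⧸ N)).comap N.mkQ ↔ ∃ k : ℕ, 0 < k ∧ (k : ℤ) • x ∈ N := by
  rw [mem_comap_mkQ_torsion_iff]
  constructor
  · rintro ⟨⟨a, ha⟩, hax⟩
    refine ⟨a.natAbs, Int.natAbs_pos.2 (nonZeroDivisors.ne_zero ha), ?_⟩
    rw [← Int.sign_mul_self, mul_smul]
    exact N.smul_mem _ hax
  · rintro ⟨k, hk, hkx⟩
    exact ⟨⟨k, mem_nonZeroDivisors_of_ne_zero (by exact_mod_cast hk.ne')⟩, hkx⟩

end Submodule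

open Submodule in
theorem stmt13_general (n l m : ℕ) (A : Matrix (Fin n) (Fin n) ℤ)
    (hT : {x : Fin n → ℤ | ∃ k : ℕ, 0 < k ∧
        (k : ℤ) • x ∈ LinearMap.range (Matrix.mulVecLin (1 - A ^ (l * m)))} =
      {x : Fin n → ℤ | ∃ k : ℕ, 0 < k ∧
        (k : ℤ) • x ∈ LinearMap.range (Matrix.mulVecLin (1 - A ^ l))}) :
    ∃ e : (((Fin n → ℤ) ⧸ LinearMap.range (Matrix.mulVecLin (1 - A ^ (l * m)))) ⧸
            Submodule.torsion ℤ
              ((Fin n → ℤ) ⧸ LinearMap.range (Matrix.mulVecLin (1 - A ^ (l * m))))) ≃ₗ[ℤ]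
          (((Fin n → ℤ) ⧸ LinearMap.range (Matrix.mulVecLin (1 - A ^ l))) ⧸
            Submodule.torsion ℤ
              ((Fin n → ℤ) ⧸ LinearMap.range (Matrix.mulVecLin (1 - A ^ l)))),
      ∀ a : Fin n → ℤ,
        e (Submodule.Quotient.mk (Submodule.Quotient.mk a)) =
          Submodule.Quotient.mk (Submodule.Quotient.mk a) := by
  set R₁ := LinearMap.range (Matrix.mulVecLin (1 - A ^ (l * m)))
  set R₂ := LinearMap.range (Matrix.mulVecLin (1 - A ^ l))
  have hT' : (torsion ℤ (_ ⧸ R₁)).comap R₁.mkQ = (torsion ℤ (_ ⧸ R₂)).comap R₂.mkQ := by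
    ext x
    simpa only [mem_comap_mkQ_torsion_iff_int, Set.mem_ofPred_eq] using Set.ext_iff.1 hT x
  refine ⟨quotientQuotientEquivQuotientComapMkQ R₁ _ ≪≫ₗ quotEquivOfEq _ _ hT' ≪≫ₗ
    (quotientQuotientEquivQuotientComapMkQ R₂ _).symm, fun a => ?_⟩
  simp [LinearEquiv.symm_apply_eq]

/-- If `T_{lm} = T_l`, then `a ↦ a` induces an isomorphism
`coker(1 - A^{lm})/tor ≅ coker(1 - A^l)/tor`. -/
theorem stmt13 (n l m : ℕ) (hl : 1 ≤ l) (hm : 1 ≤ m) (A : Matrix (Fin n) (Fin n) ℤ)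
    (hT : {x : Fin n → ℤ | ∃ k : ℕ, 0 < k ∧
        (k : ℤ) • x ∈ LinearMap.range (Matrix.mulVecLin (1 - A ^ (l * m)))} =
      {x : Fin n → ℤ | ∃ k : ℕ, 0 < k ∧
        (k : ℤ) • x ∈ LinearMap.range (Matrix.mulVecLin (1 - A ^ l))}) :
    ∃ e : (((Fin n → ℤ) ⧸ LinearMap.range (Matrix.mulVecLin (1 - A ^ (l * m)))) ⧸
            Submodule.torsion ℤ
              ((Fin n → ℤ) ⧸ LinearMap.range (Matrix.mulVecLin (1 - A ^ (l * m))))) ≃ₗ[ℤ]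
          (((Fin n → ℤ) ⧸ LinearMap.range (Matrix.mulVecLin (1 - A ^ l))) ⧸
            Submodule.torsion ℤ
              ((Fin n → ℤ) ⧸ LinearMap.range (Matrix.mulVecLin (1 - A ^ l)))),
      ∀ a : Fin n → ℤ,
        e (Submodule.Quotient.mk (Submodule.Quotient.mk a)) =
          Submodule.Quotient.mk (Submodule.Quotient.mk a) :=
  stmt13_general n l m A hT
end

section
/- Let A be an n×n integer matrix whose index set is partitioned into blocks Λ_0, …, Λ_{l-1} such that A maps ℤ^{Λ_j} into ℤ^{Λ_{j-1 mod l}} for each j (so A^l preserves each block). Then for each j, the inclusion ℤ^{Λ_j} ↪ ℤⁿ induces a group isomorphism ℤ^{Λ_j}/(1 - A^l)(ℤ^{Λ_j}) ≅ ℤⁿ/im(1 - A). -/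
/-!
Write `b_k` for the `P k`-component of `b`, where `f` maps `P k` into `P (k - 1)`.
Surjectivity: `x_k ≡ f^(k - j) x_k` modulo `range (1 - f)` because `1 - f^m = (1 - f) ∑_{i<m} f^i`,
and `f^(k - j) x_k ∈ P j`.
Injectivity: the `k`-component of `(1 - f) b` is `b_k - f b_(k+1)`. If `(1 - f) b ∈ P j`, these
vanish for `k ≠ j`, so going around the cycle `b_(j+1) = f^(l-1) b_j`, and then
`(1 - f) b = b_j - f b_(j+1) = (1 - f^l) b_j`.
-/

open DirectSum

namespace Submodule

variable {R M : Type*} [Ring R] [AddCommGroup M] [Module R M]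

theorem ker_mkQ_comp_subtype (p q : Submodule R M) :
    LinearMap.ker (q.mkQ ∘ₗ p.subtype) = q.comap p.subtype := by
  rw [LinearMap.ker_comp, ker_mkQ]

noncomputable def quotientComapSubtypeEquivOfSupEqTop {p q : Submodule R M} (h : p ⊔ q = ⊤) :
    (p ⧸ q.comap p.subtype) ≃ₗ[R] M ⧸ q :=
  (quotEquivOfEq _ _ (ker_mkQ_comp_subtype p q).symm).trans
    ((q.mkQ ∘ₗ p.subtype).quotKerEquivOfSurjective <| LinearMap.range_eq_top.mp <| by
      rw [LinearMap.range_comp, range_subtype, map_mkQ_eq_top, sup_comm, h])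

theorem quotientComapSubtypeEquivOfSupEqTop_mk {p q : Submodule R M} (h : p ⊔ q = ⊤) (x : p) :
    quotientComapSubtypeEquivOfSupEqTop h (Quotient.mk x) = Quotient.mk (x : M) :=
  rfl

end Submodule

theorem DirectSum.sum_univ_decompose {ι M σ : Type*} [DecidableEq ι] [Fintype ι]
    [AddCommMonoid M] [SetLike σ M] [AddSubmonoidClass σ M] (ℳ : ι → σ) [Decomposition ℳ] (x : M) :
    ∑ i, (decompose ℳ x i : M) = x := by
  conv_rhs => rw [← (decompose ℳ).symm_apply_apply x, ← sum_univ_of (decompose ℳ x)]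
  simp only [decompose_symm_sum, decompose_symm_of]

abbrev DirectSum.Decomposition.ofCoordinateBlocks {R ι κ : Type*} [Semiring R] [DecidableEq κ]
    [Fintype κ] {φ : ι → Type*} [∀ i, AddCommMonoid (φ i)] [∀ i, Module R (φ i)] (Λ : ι → κ)
    (P : κ → Submodule R (∀ i, φ i)) (hP : ∀ k x, x ∈ P k ↔ ∀ i, Λ i ≠ k → x i = 0) :
    Decomposition P where
  decompose' x := ∑ k, of (fun k => P k) k
    ⟨fun i => if Λ i = k then x i else 0, (hP k _).2 fun i hi => if_neg hi⟩
  left_inv x := by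
    funext i
    simp [Finset.sum_apply]
  right_inv d := by
    have hcoe (i : ι) : DirectSum.coeAddMonoidHom P d i = (d (Λ i) : ∀ i, φ i) i := by
      conv_lhs => rw [← sum_univ_of d]
      simp only [map_sum, coeAddMonoidHom_of, Finset.sum_apply]
      exact Finset.sum_eq_single _ (fun k _ hk => (hP k _).1 (d k).2 i (Ne.symm hk)) (by simp)
    ext k i
    simp only [hcoe, sum_apply, of_apply, Finset.sum_dite_eq', Finset.mem_univ, ↓reduceIte]
    split_ifs with h
    · rw [h]
    · exact ((hP k _).1 (d k).2 i h).symm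

theorem Module.End.range_one_sub_pow_le {R M : Type*} [Ring R] [AddCommGroup M] [Module R M]
    (f : Module.End R M) (m : ℕ) : LinearMap.range (1 - f ^ m) ≤ LinearMap.range (1 - f) := by
  rw [← mul_neg_geom_sum, Module.End.mul_eq_comp]
  exact LinearMap.range_comp_le_range _ _

namespace Module.End

open Fin.NatCast

variable {R M : Type*} [Ring R] [AddCommGroup M] [Module R M] {l : ℕ} [NeZero l]
  {P : Fin l → Submodule R M} {f : Module.End R M}

theorem pow_apply_mem_of_map_le (hf : ∀ k, (P k).map f ≤ P (k - 1)) (m : ℕ) {k : Fin l} {x : M}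
    (hx : x ∈ P k) : (f ^ m) x ∈ P (k - (m : Fin l)) := by
  induction m with
  | zero => simpa using hx
  | succ m ih =>
    rw [pow_succ', mul_apply, Nat.cast_succ, ← sub_sub]
    exact hf _ (Submodule.mem_map_of_mem ih)

variable [Decomposition P]

theorem decompose_apply_of_map_le (hf : ∀ k, (P k).map f ≤ P (k - 1)) (x : M) (k : Fin l) :
    (decompose P (f x) k : M) = f (decompose P x (k + 1)) := by
  have hmem (m : Fin l) : f (decompose P x m) ∈ P (m - 1) :=
    hf m (Submodule.mem_map_of_mem (decompose P x m).2)
  conv_lhs => rw [← sum_univ_decompose P x, map_sum, decompose_sum, DFinsupp.finsetSum_apply,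
    Submodule.coe_sum]
  refine (Finset.sum_eq_single (k + 1) (fun m _ hm => decompose_of_mem_ne P (hmem m) ?_)
    (by simp)).trans (decompose_of_mem_same P (by simpa using hmem (k + 1)))
  rintro rfl
  exact hm (sub_add_cancel m 1).symm

theorem decompose_one_sub_apply_of_map_le (hf : ∀ k, (P k).map f ≤ P (k - 1)) (x : M)
    (k : Fin l) :
    (decompose P ((1 - f) x) k : M) = decompose P x k - f (decompose P x (k + 1)) := by
  rw [LinearMap.sub_apply, one_apply, decompose_sub, DirectSum.sub_apply, Submodule.coe_sub,
    decompose_apply_of_map_le hf]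

theorem sup_range_one_sub_eq_top (hf : ∀ k, (P k).map f ≤ P (k - 1)) (j : Fin l) :
    P j ⊔ LinearMap.range (1 - f) = ⊤ := by
  refine eq_top_iff.mpr fun x _ => ?_
  rw [← sum_univ_decompose P x]
  refine Submodule.sum_mem _ fun k _ => ?_
  set m := (k - j).val
  have hm : (f ^ m) (decompose P x k) ∈ P j := by
    simpa [m] using pow_apply_mem_of_map_le hf m (decompose P x k).2
  have hsub : (decompose P x k : M) - (f ^ m) (decompose P x k) ∈ LinearMap.range (1 - f) :=
    range_one_sub_pow_le f m ⟨_, rfl⟩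
  simpa using Submodule.add_mem_sup hm hsub

theorem decompose_sub_natCast_eq_pow_apply (hf : ∀ k, (P k).map f ≤ P (k - 1)) {b : M}
    {j : Fin l} (hb : (1 - f) b ∈ P j) {i : ℕ} (hi : i < l) :
    (decompose P b (j - (i : Fin l)) : M) = (f ^ i) (decompose P b j) := by
  induction i with
  | zero => rw [Nat.cast_zero, sub_zero, pow_zero, one_apply]
  | succ i ih =>
    have hne : j ≠ j - (↑(i + 1) : Fin l) := by
      rw [ne_comm, Ne, sub_eq_self, Fin.natCast_eq_zero]
      exact fun h => (Nat.le_of_dvd i.succ_pos h).not_gt hi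
    have hrec := decompose_of_mem_ne P hb hne
    rw [decompose_one_sub_apply_of_map_le hf, sub_eq_zero, Nat.cast_succ, ← sub_sub,
      sub_add_cancel] at hrec
    rw [Nat.cast_succ, ← sub_sub, hrec, ih (by omega), pow_succ', mul_apply]

theorem mem_map_one_sub_pow_of_mem_range (hf : ∀ k, (P k).map f ≤ P (k - 1)) {j : Fin l} {y : M}
    (hy : y ∈ P j) (hy' : y ∈ LinearMap.range (1 - f)) : y ∈ (P j).map (1 - f ^ l) := by
  obtain ⟨b, rfl⟩ := hy'
  refine ⟨decompose P b j, (decompose P b j).2, ?_⟩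
  have hl := NeZero.pos l
  have hnext : j + 1 = j - ((l - 1 : ℕ) : Fin l) := by
    rw [eq_sub_iff_add_eq, add_assoc, add_comm 1, ← Nat.cast_add_one,
      Nat.sub_one_add_one (NeZero.ne l), Fin.natCast_self, add_zero]
  rw [← decompose_of_mem_same P hy, decompose_one_sub_apply_of_map_le hf, hnext,
    decompose_sub_natCast_eq_pow_apply hf hy (by omega), ← mul_apply, ← pow_succ',
    Nat.sub_one_add_one (NeZero.ne l)]
  rfl

theorem comap_subtype_range_one_sub (hf : ∀ k, (P k).map f ≤ P (k - 1)) (j : Fin l) :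
    (LinearMap.range (1 - f)).comap (P j).subtype =
      ((P j).map (1 - f ^ l)).comap (P j).subtype := by
  ext ⟨y, hy⟩
  exact ⟨mem_map_one_sub_pow_of_mem_range hf hy,
    fun h => range_one_sub_pow_le f l (LinearMap.map_le_range h)⟩

noncomputable def quotientEquivQuotientRangeOneSub (hf : ∀ k, (P k).map f ≤ P (k - 1))
    (j : Fin l) :
    (P j ⧸ ((P j).map (1 - f ^ l)).comap (P j).subtype) ≃ₗ[R] M ⧸ LinearMap.range (1 - f) :=
  (Submodule.quotEquivOfEq _ _ (comap_subtype_range_one_sub hf j).symm).trans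
    (Submodule.quotientComapSubtypeEquivOfSupEqTop (sup_range_one_sub_eq_top hf j))

theorem quotientEquivQuotientRangeOneSub_mk (hf : ∀ k, (P k).map f ≤ P (k - 1)) (j : Fin l)
    (x : P j) : quotientEquivQuotientRangeOneSub hf j (Submodule.Quotient.mk x) =
      Submodule.Quotient.mk (x : M) :=
  rfl

end Module.End

/-- If the blocks `Λ_j` are cyclically shifted by `A` (so `A^l` preserves each block), then
the inclusion `ℤ^{Λ_j} ↪ ℤⁿ` induces an isomorphism
`ℤ^{Λ_j}/(1 - A^l)(ℤ^{Λ_j}) ≅ ℤⁿ/im(1 - A)`. -/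
theorem stmt17 (n l : ℕ) [NeZero l] (A : Matrix (Fin n) (Fin n) ℤ) (Λ : Fin n → Fin l)
    (P : Fin l → Submodule ℤ (Fin n → ℤ))
    (hP : ∀ (j : Fin l) (x : Fin n → ℤ), x ∈ P j ↔ ∀ i, Λ i ≠ j → x i = 0)
    (hshift : ∀ j : Fin l, Submodule.map (Matrix.mulVecLin A) (P j) ≤ P (j - 1))
    (j : Fin l) :
    ∃ e : (P j ⧸ Submodule.comap (P j).subtype
            (Submodule.map (Matrix.mulVecLin (1 - A ^ l)) (P j))) ≃ₗ[ℤ]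
          ((Fin n → ℤ) ⧸ LinearMap.range (Matrix.mulVecLin (1 - A))),
      ∀ (x : Fin n → ℤ) (hx : x ∈ P j),
        e (Submodule.Quotient.mk (⟨x, hx⟩ : P j)) = Submodule.Quotient.mk x := by
  let := Decomposition.ofCoordinateBlocks Λ P hP
  have hsub (B : Matrix (Fin n) (Fin n) ℤ) : (1 - B).mulVecLin = 1 - B.mulVecLin := by
    rw [← Matrix.toLin'_apply', ← Matrix.toLin'_apply', map_sub, Matrix.toLin'_one,
      Module.End.one_eq_id]
  have hpow : (A ^ l).mulVecLin = A.mulVecLin ^ l := Matrix.toLin'_pow A l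
  rw [hsub, hsub, hpow]
  exact ⟨Module.End.quotientEquivQuotientRangeOneSub hshift j,
    fun x hx => Module.End.quotientEquivQuotientRangeOneSub_mk hshift j ⟨x, hx⟩⟩
end

section
/- Let A be an n×n integer matrix whose index set is partitioned into l blocks cyclically shifted by A (A·ℤ^{Λ_j} ⊆ ℤ^{Λ_{j-1 mod l}}). Then coker(1 - A^l) is isomorphic to the direct sum of l copies of coker(1 - A), and consequently the rank of coker(1 - A^l) equals l times the rank of coker(1 - A). -/
/-!
Let `e_j` be the projections onto the blocks and `f = A`, so that `e_j f = f e_{j+1}`.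
The map `x ↦ ([e_j x])_j` from `M = ℤⁿ` to `(M ⧸ (1 - f)M)^l` is the isomorphism. Everything
rests on the operator `g_j = ∑_{m<l} f^m e_{j+m}`, which moves every block into block `j`:
it fixes block `j`, it is `≡ 1` modulo `(1 - f)`, and by telescoping
`g_j (1 - f) = (1 - f^l) e_j`.
Hence an element of block `j` lying in `(1 - f)M` lies in `(1 - f^l)M` (the kernel), and the
`g_j` lift any tuple of classes (surjectivity). Over `ℤ`, rank–nullity makes rank additive on
products, which gives the rank identity.
-/

namespace BlockShift

open Finset Fin.NatCast

variable {S : Type*} [Ring S] {l : ℕ} [NeZero l] {e : Fin l → S} {f : S}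

theorem mul_pow_eq (hf : ∀ j, e j * f = f * e (j + 1)) (j : Fin l) (m : ℕ) :
    e j * f ^ m = f ^ m * e (j + (m : Fin l)) := by
  induction m with
  | zero => simp
  | succ m ih =>
    rw [pow_succ, ← mul_assoc, ih, mul_assoc, hf, ← mul_assoc, Nat.cast_succ, add_assoc]

theorem mul_pow_self (hf : ∀ j, e j * f = f * e (j + 1)) (j : Fin l) :
    e j * f ^ l = f ^ l * e j := by
  rw [mul_pow_eq hf, Fin.natCast_self, add_zero]

variable (e f) in
def gather (j : Fin l) : S := ∑ m ∈ range l, f ^ m * e (j + (m : Fin l))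

theorem sum_range_add_eq_one (he : CompleteOrthogonalIdempotents e) (j : Fin l) :
    ∑ m ∈ range l, e (j + (m : Fin l)) = 1 := by
  rw [← Fin.sum_univ_eq_sum_range (fun m => e (j + (m : Fin l))), ← he.complete]
  simp only [Fin.cast_val_eq_self]
  exact Fintype.sum_equiv (Equiv.addLeft j) _ _ fun _ => rfl

theorem mul_gather (he : CompleteOrthogonalIdempotents e) (hf : ∀ j, e j * f = f * e (j + 1))
    (k j : Fin l) : e k * gather e f j = if k = j then gather e f j else 0 := by
  classical
  have : ∀ m : ℕ, e k * (f ^ m * e (j + (m : Fin l))) =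
      if k = j then f ^ m * e (j + (m : Fin l)) else 0 := by
    intro m
    rw [← mul_assoc, mul_pow_eq hf, mul_assoc, he.mul_eq]
    by_cases hkj : k = j <;> simp [hkj]
  simp only [gather, mul_sum, this]
  split_ifs <;> simp

theorem gather_mul_self (he : CompleteOrthogonalIdempotents e) (j : Fin l) :
    gather e f j * e j = e j := by
  rw [gather, sum_mul, sum_eq_single 0]
  · simp [(he.idem j).eq]
  · intro m hm hm0
    have : j + (m : Fin l) ≠ j := by
      rw [Ne, add_eq_left, Fin.natCast_eq_zero]
      exact fun hdvd => hm0 (Nat.eq_zero_of_dvd_of_lt hdvd (mem_range.mp hm))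
    rw [mul_assoc, he.ortho this, mul_zero]
  · simp [NeZero.pos l]

theorem gather_mul_one_sub (hf : ∀ j, e j * f = f * e (j + 1)) (j : Fin l) :
    gather e f j * (1 - f) = (1 - f ^ l) * e j := by
  have hstep : ∀ m : ℕ,
      f ^ m * e (j + (m : Fin l)) * f = f ^ (m + 1) * e (j + ((m + 1 : ℕ) : Fin l)) := by
    intro m
    rw [mul_assoc, hf, ← mul_assoc, ← pow_succ, Nat.cast_succ, add_assoc]
  rw [gather, mul_sub, mul_one, sum_mul, ← sum_sub_distrib,
    sum_congr rfl fun m _ => by rw [hstep],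
    sum_range_sub' (fun m => f ^ m * e (j + (m : Fin l)))]
  simp [sub_mul]

theorem gather_sub_one_eq_mul (he : CompleteOrthogonalIdempotents e) (j : Fin l) :
    gather e f j - 1 =
      (1 - f) * -∑ m ∈ range l, (∑ i ∈ range m, f ^ i) * e (j + (m : Fin l)) := by
  rw [mul_neg, mul_sum]
  simp only [← mul_assoc, mul_neg_geom_sum]
  simp only [sub_mul, one_mul, sum_sub_distrib, sum_range_add_eq_one he, gather]
  abel

theorem mul_eq_mul_succ_of_mul_mul_eq (he : CompleteOrthogonalIdempotents e)
    (h : ∀ i, e (i - 1) * f * e i = f * e i) (j : Fin l) : e j * f = f * e (j + 1) := by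
  classical
  have hterm : ∀ i, e j * f * e i = if j + 1 = i then f * e i else 0 := by
    intro i
    rw [mul_assoc, ← h i, ← mul_assoc, ← mul_assoc, he.mul_eq]
    obtain rfl | hji := eq_or_ne (j + 1) i
    · simp
    · have : j ≠ i - 1 := fun h' => hji (by rw [h', sub_add_cancel])
      simp [this, hji]
  calc e j * f = ∑ i, e j * f * e i := by rw [← mul_sum, he.complete, mul_one]
    _ = f * e (j + 1) := by simp only [hterm, sum_ite_eq, mem_univ, if_true]

section Module

open LinearMap Submodule

variable {R M : Type*} [Ring R] [AddCommGroup M] [Module R M] {e : Fin l → Module.End R M}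
  {f : Module.End R M}

theorem mul_mul_eq_of_map_range_le (he : CompleteOrthogonalIdempotents e)
    (h : ∀ j, (range (e j)).map f ≤ range (e (j - 1))) (j : Fin l) :
    e (j - 1) * f * e j = f * e j :=
  LinearMap.ext fun x =>
    (he.idem (j - 1)).mem_range_iff.mp (h j ⟨e j x, mem_range_self _ _, rfl⟩)

theorem range_one_sub_pow_le (f : Module.End R M) (m : ℕ) :
    range (1 - f ^ m) ≤ range (1 - f) := by
  rw [← mul_neg_geom_sum f m]
  exact range_comp_le_range _ _

variable (e f) in
def toPiQuotient : M →ₗ[R] Fin l → M ⧸ range (1 - f) :=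
  LinearMap.pi fun j => (range (1 - f)).mkQ ∘ₗ e j

omit [NeZero l] in
theorem toPiQuotient_apply (x : M) (j : Fin l) :
    toPiQuotient e f x j = Submodule.Quotient.mk (e j x) := rfl

theorem ker_toPiQuotient (he : CompleteOrthogonalIdempotents e)
    (hf : ∀ j, e j * f = f * e (j + 1)) : ker (toPiQuotient e f) = range (1 - f ^ l) := by
  ext x
  simp only [mem_ker, funext_iff, toPiQuotient_apply, Pi.zero_apply, Quotient.mk_eq_zero]
  constructor
  · intro hx
    have hsum : ∑ j, e j x = x := by
      rw [← LinearMap.sum_apply, he.complete, Module.End.one_apply]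
    refine hsum ▸ sum_mem fun j _ => ?_
    obtain ⟨y, hy⟩ := hx j
    refine ⟨e j y, ?_⟩
    calc (1 - f ^ l) (e j y) = gather e f j ((1 - f) y) := by
          rw [← Module.End.mul_apply, ← gather_mul_one_sub hf, Module.End.mul_apply]
      _ = e j x := by rw [hy, ← Module.End.mul_apply, gather_mul_self he]
  · rintro ⟨y, rfl⟩ j
    have hcomm : e j * (1 - f ^ l) = (1 - f ^ l) * e j := by
      rw [mul_sub, sub_mul, mul_pow_self hf, mul_one, one_mul]
    exact range_one_sub_pow_le f l ⟨e j y, by rw [← Module.End.mul_apply, ← hcomm]; rfl⟩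

theorem toPiQuotient_surjective (he : CompleteOrthogonalIdempotents e)
    (hf : ∀ j, e j * f = f * e (j + 1)) : Function.Surjective (toPiQuotient e f) := by
  classical
  intro w
  choose y hy using fun j => mkQ_surjective _ (w j)
  refine ⟨∑ j, gather e f j (y j), funext fun k => ?_⟩
  simp only [toPiQuotient_apply, map_sum, ← Module.End.mul_apply, mul_gather he hf]
  simp only [DFunLike.ite_apply, LinearMap.zero_apply, sum_ite_eq, mem_univ, if_true, ← hy k,
    mkQ_apply]
  rw [Submodule.Quotient.eq]
  exact ⟨_, by rw [← Module.End.mul_apply, ← gather_sub_one_eq_mul he, LinearMap.sub_apply,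
    Module.End.one_apply]⟩

variable (e f) in
noncomputable def quotientRangeOneSubPowEquiv (he : CompleteOrthogonalIdempotents e)
    (hf : ∀ j, e j * f = f * e (j + 1)) :
    (M ⧸ range (1 - f ^ l)) ≃ₗ[R] (Fin l → M ⧸ range (1 - f)) :=
  (quotEquivOfEq _ _ (ker_toPiQuotient he hf).symm).trans
    ((toPiQuotient e f).quotKerEquivOfSurjective (toPiQuotient_surjective he hf))

end Module

end BlockShift

section Rank

open LinearMap

universe u

variable {R M N : Type u} [Ring R] [HasRankNullity.{u} R] [AddCommGroup M] [Module R M]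
  [AddCommGroup N] [Module R N]

theorem rank_prod_of_hasRankNullity :
    Module.rank R (M × N) = Module.rank R M + Module.rank R N := by
  have h := (snd R M N).rank_range_add_rank_ker
  rw [Submodule.range_snd, rank_top, ker_snd, rank_range_of_injective _ inl_injective,
    add_comm] at h
  exact h.symm

theorem rank_fin_fun_of_hasRankNullity (m : ℕ) :
    Module.rank R (Fin m → M) = m * Module.rank R M := by
  induction m with
  | zero =>
    have := nontrivial_of_hasRankNullity (R := R)
    simp
  | succ m ih =>
    rw [← (Fin.consLinearEquiv R fun _ => M).rank_eq, rank_prod_of_hasRankNullity, ih]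
    push_cast
    ring

end Rank

section BlockProj

variable {ι κ R : Type*} [Semiring R] [DecidableEq κ]

def blockProj (Λ : ι → κ) (j : κ) : Module.End R (ι → R) where
  toFun x i := if Λ i = j then x i else 0
  map_add' x y := by ext i; by_cases h : Λ i = j <;> simp [h]
  map_smul' r x := by ext i; by_cases h : Λ i = j <;> simp [h]

theorem blockProj_apply (Λ : ι → κ) (j : κ) (x : ι → R) (i : ι) :
    blockProj Λ j x i = if Λ i = j then x i else 0 := rfl

theorem completeOrthogonalIdempotents_blockProj [Fintype κ] (Λ : ι → κ) :
    CompleteOrthogonalIdempotents (blockProj (R := R) Λ) where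
  idem j := by ext x i; by_cases h : Λ i = j <;> simp [blockProj_apply, h]
  ortho j k hjk := by ext x i; by_cases h : Λ i = k <;> simp [blockProj_apply, h, hjk.symm]
  complete := by ext x i; simp [blockProj_apply]

theorem mem_range_blockProj {Λ : ι → κ} {j : κ} {x : ι → R} :
    x ∈ LinearMap.range (blockProj Λ j) ↔ ∀ i, Λ i ≠ j → x i = 0 := by
  constructor
  · rintro ⟨y, rfl⟩ i hi
    simp [blockProj_apply, hi]
  · intro hx
    refine ⟨x, funext fun i => ?_⟩
    by_cases hi : Λ i = j
    · simp [blockProj_apply, hi]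
    · simp [blockProj_apply, hi, hx i hi]

end BlockProj

theorem Matrix.mulVecLin_one_sub {n R : Type*} [Fintype n] [DecidableEq n] [CommRing R]
    (A : Matrix n n R) : (1 - A).mulVecLin = 1 - A.mulVecLin :=
  map_sub Matrix.toLinAlgEquiv' 1 A |>.trans (by rw [map_one]; rfl)

theorem Matrix.mulVecLin_pow {n R : Type*} [Fintype n] [DecidableEq n] [CommRing R]
    (A : Matrix n n R) (m : ℕ) : (A ^ m).mulVecLin = A.mulVecLin ^ m :=
  map_pow Matrix.toLinAlgEquiv' A m

/-- If the blocks `Λ_j` are cyclically shifted by `A`, then `coker(1 - A^l)` is isomorphic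
to `l` copies of `coker(1 - A)`, and its rank is `l` times the rank of `coker(1 - A)`. -/
theorem stmt18 (n l : ℕ) [NeZero l] (A : Matrix (Fin n) (Fin n) ℤ) (Λ : Fin n → Fin l)
    (P : Fin l → Submodule ℤ (Fin n → ℤ))
    (hP : ∀ (j : Fin l) (x : Fin n → ℤ), x ∈ P j ↔ ∀ i, Λ i ≠ j → x i = 0)
    (hshift : ∀ j : Fin l, Submodule.map (Matrix.mulVecLin A) (P j) ≤ P (j - 1)) :
    Nonempty (((Fin n → ℤ) ⧸ LinearMap.range (Matrix.mulVecLin (1 - A ^ l))) ≃ₗ[ℤ]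
        (Fin l → ((Fin n → ℤ) ⧸ LinearMap.range (Matrix.mulVecLin (1 - A))))) ∧
    Module.rank ℤ ((Fin n → ℤ) ⧸ LinearMap.range (Matrix.mulVecLin (1 - A ^ l))) =
      (l : Cardinal) *
        Module.rank ℤ ((Fin n → ℤ) ⧸ LinearMap.range (Matrix.mulVecLin (1 - A))) := by
  set e : Fin l → Module.End ℤ (Fin n → ℤ) := blockProj Λ
  have he : CompleteOrthogonalIdempotents e := completeOrthogonalIdempotents_blockProj Λ
  have hPe : ∀ j, P j = LinearMap.range (e j) := fun j => by ext x; rw [hP, mem_range_blockProj]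
  have hA : ∀ j, e j * A.mulVecLin = A.mulVecLin * e (j + 1) :=
    BlockShift.mul_eq_mul_succ_of_mul_mul_eq he
      (BlockShift.mul_mul_eq_of_map_range_le he fun j => by simpa only [hPe] using hshift j)
  let E := BlockShift.quotientRangeOneSubPowEquiv e A.mulVecLin he hA
  rw [Matrix.mulVecLin_one_sub, Matrix.mulVecLin_one_sub, Matrix.mulVecLin_pow]
  exact ⟨⟨E⟩, by rw [E.rank_eq, rank_fin_fun_of_hasRankNullity]⟩
end

section
/- Let A be an n×n integer matrix and suppose C := ∑_{i=0}^{m-1} A^{il} has nonzero determinant. If x ∈ ℤⁿ and k ∈ ℕ satisfy kx = (1 - A^l)y for some y ∈ ℤⁿ, then (k·det C)·x ∈ im(1 - A^{lm}); conversely any x with kx ∈ im(1 - A^{lm}) for some k ≥ 1 satisfies kx ∈ im(1 - A^l). Hence the rational spans of im(1 - A^l) and im(1 - A^{lm}) in ℚⁿ coincide. -/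
/-!
Write `B = 1 - A^l` and `C = ∑_{i<m} (A^l)^i`, so that `1 - A^{lm} = B * C` by the geometric
sum. Hence `im(B * C) ⊆ im B`, and conversely `B * C * adj C = det C • B` shows that
`det C • im B ⊆ im(B * C)`. When `det C ≠ 0` the two lattices therefore agree up to a nonzero
scalar and span the same `ℚ`-subspace.
-/

open Matrix

theorem Matrix.range_mulVecLin_mul_le_s19 {k m n R : Type*} [Fintype m] [Fintype n]
    [CommSemiring R] (B : Matrix k m R) (C : Matrix m n R) :
    LinearMap.range (B * C).mulVecLin ≤ LinearMap.range B.mulVecLin := by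
  rw [mulVecLin_mul]
  exact LinearMap.range_comp_le_range _ _

theorem Matrix.det_smul_mem_range_mulVecLin_mul_s19 {k n R : Type*} [Fintype n] [DecidableEq n]
    [CommRing R] (B : Matrix k n R) (C : Matrix n n R) {v : k → R}
    (hv : v ∈ LinearMap.range B.mulVecLin) :
    C.det • v ∈ LinearMap.range (B * C).mulVecLin := by
  obtain ⟨y, rfl⟩ := hv
  refine ⟨C.adjugate *ᵥ y, ?_⟩
  rw [mulVecLin_apply, mulVecLin_apply, mulVec_mulVec, Matrix.mul_assoc, mul_adjugate, Matrix.mul_smul,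
    Matrix.mul_one, smul_mulVec]

theorem Submodule.span_rat_image_le_of_forall_zsmul_mem {M V : Type*} [AddCommGroup M]
    [AddCommGroup V] [Module ℚ V] (φ : M →+ V) {S T : Set M}
    (h : ∀ t ∈ T, ∃ d : ℤ, d ≠ 0 ∧ d • t ∈ S) :
    Submodule.span ℚ (φ '' T) ≤ Submodule.span ℚ (φ '' S) := by
  rw [Submodule.span_le]
  rintro _ ⟨t, ht, rfl⟩
  obtain ⟨d, hd, hdt⟩ := h t ht
  have hmem : (d : ℚ) • φ t ∈ Submodule.span ℚ (φ '' S) := by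
    rw [Int.cast_smul_eq_zsmul, ← map_zsmul]
    exact Submodule.subset_span ⟨_, hdt, rfl⟩
  simpa [smul_smul, hd] using Submodule.smul_mem _ (d : ℚ)⁻¹ hmem

theorem stmt19_general (n l m : ℕ) (A : Matrix (Fin n) (Fin n) ℤ)
    (hdet : (∑ i ∈ Finset.range m, (A ^ l) ^ i).det ≠ 0) :
    (∀ (x y : Fin n → ℤ) (k : ℕ), (k : ℤ) • x = (1 - A ^ l).mulVec y →
      ((k : ℤ) * (∑ i ∈ Finset.range m, (A ^ l) ^ i).det) • x ∈
        LinearMap.range (Matrix.mulVecLin (1 - A ^ (l * m)))) ∧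
    (∀ (x : Fin n → ℤ) (k : ℕ), 0 < k →
      (k : ℤ) • x ∈ LinearMap.range (Matrix.mulVecLin (1 - A ^ (l * m))) →
      (k : ℤ) • x ∈ LinearMap.range (Matrix.mulVecLin (1 - A ^ l))) ∧
    Submodule.span ℚ ((fun (x : Fin n → ℤ) (i : Fin n) => (x i : ℚ)) ''
        (LinearMap.range (Matrix.mulVecLin (1 - A ^ l)) : Set (Fin n → ℤ))) =
      Submodule.span ℚ ((fun (x : Fin n → ℤ) (i : Fin n) => (x i : ℚ)) ''
        (LinearMap.range (Matrix.mulVecLin (1 - A ^ (l * m))) : Set (Fin n → ℤ))) := by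
  set C := ∑ i ∈ Finset.range m, (A ^ l) ^ i
  have hfactor : 1 - A ^ (l * m) = (1 - A ^ l) * C := by
    rw [mul_neg_geom_sum, pow_mul]
  have hsmul : ∀ v ∈ LinearMap.range (1 - A ^ l).mulVecLin,
      C.det • v ∈ LinearMap.range (1 - A ^ (l * m)).mulVecLin := fun v hv => by
    rw [hfactor]
    exact det_smul_mem_range_mulVecLin_mul_s19 _ _ hv
  have hle : LinearMap.range (1 - A ^ (l * m)).mulVecLin ≤
      LinearMap.range (1 - A ^ l).mulVecLin := by
    rw [hfactor]
    exact range_mulVecLin_mul_le_s19 _ _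
  refine ⟨fun x y k hxy => ?_, fun x k _ hx => hle hx, le_antisymm ?_ ?_⟩
  · rw [mul_comm (k : ℤ), mul_smul, hxy]
    exact hsmul _ ⟨y, rfl⟩
  · exact Submodule.span_rat_image_le_of_forall_zsmul_mem ((Int.castAddHom ℚ).compLeft (Fin n))
      fun v hv => ⟨C.det, hdet, hsmul v hv⟩
  · exact Submodule.span_mono (Set.image_mono hle)

/-- Passing between `im(1 - A^l)` and `im(1 - A^{lm})` up to integer multiples, when
`C = ∑_{i<m} (A^l)^i` has nonzero determinant; consequently the rational spans of the two
images coincide. -/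
theorem stmt19 (n l m : ℕ) (hl : 1 ≤ l) (hm : 1 ≤ m) (A : Matrix (Fin n) (Fin n) ℤ)
    (hdet : (∑ i ∈ Finset.range m, (A ^ l) ^ i).det ≠ 0) :
    (∀ (x y : Fin n → ℤ) (k : ℕ), (k : ℤ) • x = (1 - A ^ l).mulVec y →
      ((k : ℤ) * (∑ i ∈ Finset.range m, (A ^ l) ^ i).det) • x ∈
        LinearMap.range (Matrix.mulVecLin (1 - A ^ (l * m)))) ∧
    (∀ (x : Fin n → ℤ) (k : ℕ), 0 < k →
      (k : ℤ) • x ∈ LinearMap.range (Matrix.mulVecLin (1 - A ^ (l * m))) →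
      (k : ℤ) • x ∈ LinearMap.range (Matrix.mulVecLin (1 - A ^ l))) ∧
    Submodule.span ℚ ((fun (x : Fin n → ℤ) (i : Fin n) => (x i : ℚ)) ''
        (LinearMap.range (Matrix.mulVecLin (1 - A ^ l)) : Set (Fin n → ℤ))) =
      Submodule.span ℚ ((fun (x : Fin n → ℤ) (i : Fin n) => (x i : ℚ)) ''
        (LinearMap.range (Matrix.mulVecLin (1 - A ^ (l * m))) : Set (Fin n → ℤ))) :=
  stmt19_general n l m A hdet
end
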